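/- Generalized Cayley–Hamilton theorem, odd case: for an odd-reduced supermatrix T = [[0,α],[β,b]] with α, β odd and b even, (T - 𝓔(α))(T - 𝓔(β)) = [[0,0],[0,b²]], where 𝓔(χ) = [[0,χ],[χ,0]]; hence the odd characteristic polynomial P(χ) = (χ-α)(χ-β) annihilates T (in the anti-scalar sense) if and only if b² = 0. -/
import Mathlib


/-- Generalized Cayley–Hamilton theorem, odd case: for the odd-reduced
supermatrix T = [[0,α],[β,b]] and anti-scalars 𝓔(χ) = [[0,χ],[χ,0]],
(T - 𝓔(α))(T - 𝓔(β)) = [[0,0],[0,b²]]; hence the odd characteristic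
polynomial annihilates T iff b² = 0. -/
theorem cayley_hamilton_odd {Λ : Type*} [Ring Λ] (α β b : Λ)
    (hanti : α * β = -(β * α)) (hα2 : α * α = 0) (hβ2 : β * β = 0) :
    ((!![(0 : Λ), α; β, b] - !![(0 : Λ), α; α, 0]) *
      (!![(0 : Λ), α; β, b] - !![(0 : Λ), β; β, 0]) =
        !![(0 : Λ), 0; 0, b * b]) ∧
    ((!![(0 : Λ), α; β, b] - !![(0 : Λ), α; α, 0]) *
      (!![(0 : Λ), α; β, b] - !![(0 : Λ), β; β, 0]) = 0 ↔ b * b = 0) := by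
  have key : ((!![(0 : Λ), α; β, b] - !![(0 : Λ), α; α, 0]) *
      (!![(0 : Λ), α; β, b] - !![(0 : Λ), β; β, 0]) =
        !![(0 : Λ), 0; 0, b * b]) := by
    ext i j
    fin_cases i <;> fin_cases j <;>
      simp [Matrix.mul_apply, Fin.sum_univ_succ, mul_sub, sub_mul, hα2, hβ2, hanti]
  refine ⟨key, ?_⟩
  rw [key]
  constructor
  · intro h
    have := congrFun (congrFun h 1) 1
    simpa using this
  · intro h
    rw [h]
    ext i j; fin_cases i <;> fin_cases j <;> simp
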